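/- The map θ is self-adjoint with respect to the bilinear form ( , ): for all u, v ∈ V one has (θ(u), v) = (u, θ(v)). -/

import Mathlib

noncomputable section
namespace SqPaper

/-- The two letters: `0 ↦ A`, `1 ↦ B`. -/
abbrev Ltr := Fin 2
def lA : Ltr := 0
def lB : Ltr := 1

/-- The pairing `⟨ , ⟩` on letters: `⟨A,A⟩=⟨B,B⟩=2`, `⟨A,B⟩=⟨B,A⟩=-2`. -/
def brk (x y : Ltr) : ℤ := if x = y then 2 else -2

variable (F : Type*) [Field F]

/-- The free algebra `V` on the two generators, realized as the monoid algebra of the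
free monoid on two letters; the words form the standard basis. -/
abbrev FA := MonoidAlgebra F (FreeMonoid Ltr)

/-- The standard basis vector attached to a word (list of letters). -/
def wd (l : List Ltr) : FA F := MonoidAlgebra.single (FreeMonoid.ofList l) 1

def Agen : FA F := wd F [lA]
def Bgen : FA F := wd F [lB]

/-- View an element of `V` as a finitely supported function on words. -/
def fsp (v : FA F) : FreeMonoid Ltr →₀ F := v.coeff

/-- The symmetric bilinear form on `V` for which the standard basis of words is orthonormal. -/
def form (u v : FA F) : F := (fsp F u).sum fun w c => c * (fsp F v) w

/-- Extend a function on words to an `F`-linear map on `V`. -/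
def mkMap {M : Type*} [AddCommMonoid M] [Module F M] (f : List Ltr → M) :
    FA F →ₗ[F] M :=
  Finsupp.lsum F (fun w => LinearMap.toSpanSingleton F M (f (FreeMonoid.toList w)))
    ∘ₗ (MonoidAlgebra.coeffLinearEquiv F).toLinearMap

/-- `[3]_q = (q³ - q⁻³)/(q - q⁻¹)`. -/
def tri (q : F) : F := (q ^ 3 - q⁻¹ ^ 3) / (q - q⁻¹)

/-- The q-shuffle product on words. -/
def shufW (q : F) : List Ltr → List Ltr → FA F
  | [], v => wd F v
  | u, [] => wd F u
  | a :: u, b :: v =>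
      wd F [a] * shufW q u (b :: v) +
        (q ^ (((a :: u).map (fun x => brk x b)).sum)) • (wd F [b] * shufW q (a :: u) v)
  termination_by u v => u.length + v.length

/-- The q-shuffle product `⋆` on `V`, as a bilinear map. -/
def qshuf (q : F) : FA F →ₗ[F] FA F →ₗ[F] FA F :=
  mkMap F fun u => mkMap F fun v => shufW F q u v

/-- Iterated `⋆`-product of the letters of a word. -/
def thetaW (q : F) : List Ltr → FA F
  | [] => 1
  | a :: t => qshuf F q (wd F [a]) (thetaW q t)

/-- `θ : V → V`, the algebra homomorphism from the free algebra to the q-shuffle algebra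
with `θ(A) = A`, `θ(B) = B`. -/
def theta (q : F) : FA F →ₗ[F] FA F := mkMap F fun l => thetaW F q l

/-- `A_L`, left multiplication by `A` in the free algebra. -/
def AL : FA F →ₗ[F] FA F := LinearMap.mulLeft F (Agen F)
def BL : FA F →ₗ[F] FA F := LinearMap.mulLeft F (Bgen F)
def AR : FA F →ₗ[F] FA F := LinearMap.mulRight F (Agen F)
def BR : FA F →ₗ[F] FA F := LinearMap.mulRight F (Bgen F)

/-- `X*_L` (for the letter `x`): deletes the letter `x` from the front of a word. -/
def delL (x : Ltr) : FA F →ₗ[F] FA F :=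
  mkMap F fun l => if l.head? = some x then wd F l.tail else 0

/-- `X*_R` (for the letter `x`): deletes the letter `x` from the end of a word. -/
def delR (x : Ltr) : FA F →ₗ[F] FA F :=
  mkMap F fun l => if l.getLast? = some x then wd F l.dropLast else 0

/-- `X_ℓ`: left q-shuffle multiplication by the letter `x`. -/
def shL (q : F) (x : Ltr) : FA F →ₗ[F] FA F := qshuf F q (wd F [x])

/-- `X_r`: right q-shuffle multiplication by the letter `x`. -/
def shR (q : F) (x : Ltr) : FA F →ₗ[F] FA F := (qshuf F q).flip (wd F [x])

/-- `X*_ℓ`: the weighted deletion map, deleting an occurrence of the letter `x`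
with weight `q^{⟨v₁,x⟩+⋯+⟨v_{i-1},x⟩}`. -/
def lowL (q : F) (x : Ltr) : FA F →ₗ[F] FA F :=
  mkMap F fun l =>
    ∑ i ∈ Finset.range l.length,
      if l[i]? = some x then
        (q ^ (((l.take i).map (fun y => brk y x)).sum)) • wd F (l.eraseIdx i)
      else 0

/-- `X*_r`: the weighted deletion map, deleting an occurrence of the letter `x`
with weight `q^{⟨vₙ,x⟩+⋯+⟨v_{i+1},x⟩}`. -/
def lowR (q : F) (x : Ltr) : FA F →ₗ[F] FA F :=
  mkMap F fun l =>
    ∑ i ∈ Finset.range l.length,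
      if l[i]? = some x then
        (q ^ (((l.drop (i + 1)).map (fun y => brk y x)).sum)) • wd F (l.eraseIdx i)
      else 0

/-- `K`, the algebra automorphism of the free algebra `V` with `K(A) = q²A`, `K(B) = q⁻²B`;
on a word `v = v₁⋯vₙ` it acts as `K(v) = v·q^{⟨v₁,A⟩+⋯+⟨vₙ,A⟩}`. -/
def Kop (q : F) : FA F →ₗ[F] FA F :=
  mkMap F fun l => (q ^ ((l.map (fun y => brk y lA)).sum)) • wd F l

/-- `K⁻¹`; on a word `v = v₁⋯vₙ` it acts as `K⁻¹(v) = v·q^{⟨v₁,B⟩+⋯+⟨vₙ,B⟩}`. -/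
def Kinv (q : F) : FA F →ₗ[F] FA F :=
  mkMap F fun l => (q ^ ((l.map (fun y => brk y lB)).sum)) • wd F l

/-- `T`, the automorphism of the free algebra swapping `A` and `B`. -/
def Top : FA F →ₗ[F] FA F :=
  mkMap F fun l => wd F (l.map (fun x => if x = lA then lB else lA))

/-- `Â = Q(A_L − K B_R)` and `B̂ = Q(B_L − K⁻¹ A_R)` where `Q = 1 - q²`. -/
def hatOp (q : F) (a : Ltr) : FA F →ₗ[F] FA F :=
  if a = lA then (1 - q ^ 2) • (AL F - Kop F q ∘ₗ BR F)
  else (1 - q ^ 2) • (BL F - Kinv F q ∘ₗ AR F)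

def phiW (q : F) : List Ltr → FA F
  | [] => 1
  | a :: t => hatOp F q a (phiW q t)

/-- The map `φ`: `φ(1) = 1` and `φ(v₁⋯vₙ) = v̂₁v̂₂⋯v̂ₙ(1)`. -/
def phi (q : F) : FA F →ₗ[F] FA F := mkMap F fun l => phiW F q l

/-- `ψ = K B_R A*_L + K⁻¹ A_R B*_L`. -/
def psi (q : F) : FA F →ₗ[F] FA F :=
  Kop F q ∘ₗ BR F ∘ₗ delL F lA + Kinv F q ∘ₗ AR F ∘ₗ delL F lB

/-- `V_n`, the span of the words of length `n`. -/
def Vn (n : ℕ) : Submodule F (FA F) :=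
  Submodule.span F { x | ∃ l : List Ltr, l.length = n ∧ x = wd F l }

/-- `J⁺ = A³B − [3]_q A²BA + [3]_q ABA² − BA³`. -/
def Jp (q : F) : FA F :=
  Agen F ^ 3 * Bgen F - tri F q • (Agen F ^ 2 * Bgen F * Agen F)
    + tri F q • (Agen F * Bgen F * Agen F ^ 2) - Bgen F * Agen F ^ 3

/-- `J⁻ = B³A − [3]_q B²AB + [3]_q BAB² − AB³`. -/
def Jm (q : F) : FA F :=
  Bgen F ^ 3 * Agen F - tri F q • (Bgen F ^ 2 * Agen F * Bgen F)
    + tri F q • (Bgen F * Agen F * Bgen F ^ 2) - Agen F * Bgen F ^ 3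

/-- `J`, the two-sided ideal of the free algebra generated by `J⁺` and `J⁻`
(realized as the `F`-span of the elements `a·J^±·b`). -/
def Jsub (q : F) : Submodule F (FA F) :=
  Submodule.span F { x | ∃ a b : FA F, x = a * Jp F q * b ∨ x = a * Jm F q * b }

/-- `U`, the subalgebra of the q-shuffle algebra `(V,⋆)` generated by `A` and `B`,
realized as the span of all `⋆`-products of the letters. -/
def Usub (q : F) : Submodule F (FA F) :=
  Submodule.span F (Set.range fun l : List Ltr => thetaW F q l)

/-- A `□_q`-module structure on an `F`-vector space `M`: four operators
`x₀, x₁, x₂, x₃` (indices mod 4) satisfying the q-Weyl and q-Serre relations. -/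
structure SqAct (q : F) (M : Type*) [AddCommGroup M] [Module F M] where
  x : ZMod 4 → Module.End F M
  weyl : ∀ i : ZMod 4,
    q • (x i * x (i + 1)) - q⁻¹ • (x (i + 1) * x i) = (q - q⁻¹) • (1 : Module.End F M)
  serre : ∀ i : ZMod 4,
    x i ^ 3 * x (i + 2) - tri F q • (x i ^ 2 * x (i + 2) * x i)
      + tri F q • (x i * x (i + 2) * x i ^ 2) - x (i + 2) * x i ^ 3 = 0

variable {F} {q : F} {M : Type*} [AddCommGroup M] [Module F M]

/-- A `□_q`-module `M` is generated by `ξ` if no proper submodule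
(subspace invariant under all the `xᵢ`) contains `ξ`. -/
def SqAct.Gen (S : SqAct F q M) (ξ : M) : Prop :=
  ∀ W : Submodule F M, (∀ i : ZMod 4, ∀ m ∈ W, S.x i m ∈ W) → ξ ∈ W → W = ⊤

/-- `W_n`: the span of the vectors `u₁u₂⋯uₙ·ξ` with each `uᵢ ∈ {x₀, x₂}`. -/
def SqAct.Wn (S : SqAct F q M) (ξ : M) (n : ℕ) : Submodule F M :=
  Submodule.span F
    { m | ∃ l : List (ZMod 4), l.length = n ∧ (∀ i ∈ l, i = 0 ∨ i = 2) ∧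
        m = l.foldr (fun i acc => S.x i acc) ξ }

end SqPaper

/-! Write `x_ℓ` for left `⋆`-multiplication by a letter `x`, `x*_ℓ` for the weighted deletion
`lowL`, and `x*_L` for the deletion of a leading `x`. Then `x_ℓ` is adjoint to `x*_ℓ`, `x*_L` is
adjoint to left concatenation by `x`, and `x*_L θ = θ x*_ℓ`. As `θ(x w) = x ⋆ θ(w)`, induction on
the word `u` gives
`(θ(x w), v) = (θ(w), x*_ℓ v) = (w, θ(x*_ℓ v)) = (w, x*_L θ(v)) = (x w, θ(v))`,
the base case holding because `θ` preserves the coefficient of the empty word. -/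

namespace SqPaper

variable {F : Type*} [Field F] {q : F}

lemma brk_comm (x y : Ltr) : brk x y = brk y x := by
  simp [brk, eq_comm]

lemma mkMap_wd {M : Type*} [AddCommMonoid M] [Module F M] (f : List Ltr → M) (l : List Ltr) :
    mkMap F f (wd F l) = f l := by
  simp [mkMap, wd]

lemma lhom_ext_wd {M : Type*} [AddCommMonoid M] [Module F M] {f g : FA F →ₗ[F] M}
    (h : ∀ l, f (wd F l) = g (wd F l)) : f = g :=
  MonoidAlgebra.lhom_ext' fun a => LinearMap.ext_ring <| by simpa [wd] using h a.toList

lemma wd_mul (l m : List Ltr) : wd F l * wd F m = wd F (l ++ m) := by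
  simp [wd, MonoidAlgebra.single_mul_single]

variable (F) in
def formₗ : FA F →ₗ[F] FA F →ₗ[F] F :=
  (Finsupp.linearCombination F fun w => Finsupp.lapply w).compl₁₂
    (MonoidAlgebra.coeffLinearEquiv F).toLinearMap
    (MonoidAlgebra.coeffLinearEquiv F).toLinearMap

lemma formₗ_apply (u v : FA F) : formₗ F u v = form F u v := by
  simp [formₗ, form, fsp, Finsupp.linearCombination_apply, LinearMap.finsupp_sum_apply]

lemma formₗ_wd_wd (l m : List Ltr) : formₗ F (wd F l) (wd F m) = if l = m then 1 else 0 := by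
  classical
  simp [formₗ_apply, form, fsp, wd, Finsupp.single_apply, eq_comm]

lemma formₗ_comm (u v : FA F) : formₗ F u v = formₗ F v u := by
  suffices (formₗ F).flip = formₗ F from congr($this v u)
  refine lhom_ext_wd fun l => lhom_ext_wd fun m => ?_
  simp [formₗ_wd_wd, eq_comm]

lemma delL_wd (x : Ltr) (l : List Ltr) :
    delL F x (wd F l) = if l.head? = some x then wd F l.tail else 0 :=
  mkMap_wd _ l

lemma delL_wd_singleton_mul (x b : Ltr) (z : FA F) :
    delL F x (wd F [b] * z) = if b = x then z else 0 := by
  have : delL F x ∘ₗ LinearMap.mulLeft F (wd F [b]) = if b = x then LinearMap.id else 0 :=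
    lhom_ext_wd fun l => by split_ifs <;> simp [wd_mul, delL_wd, *]
  split_ifs at this ⊢ <;> simpa using congr($this z)

lemma formₗ_wd_singleton_mul (x : Ltr) (u v : FA F) :
    formₗ F (wd F [x] * u) v = formₗ F u (delL F x v) := by
  suffices (formₗ F).comp (LinearMap.mulLeft F (wd F [x])) = (formₗ F).compl₂ (delL F x) from
    congr($this u v)
  refine lhom_ext_wd fun l => lhom_ext_wd fun m => ?_
  rcases m with _ | ⟨b, m⟩
  · simp [wd_mul, delL_wd, formₗ_wd_wd]
  · by_cases hb : x = b <;> simp [wd_mul, delL_wd, formₗ_wd_wd, hb, Ne.symm]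

lemma shL_wd_nil (x : Ltr) : shL F q x (wd F []) = wd F [x] := by
  simp [shL, qshuf, mkMap_wd, shufW]

lemma shL_wd_cons (x b : Ltr) (t : List Ltr) :
    shL F q x (wd F (b :: t)) =
      wd F (x :: b :: t) + q ^ brk x b • (wd F [b] * shL F q x (wd F t)) := by
  simp [shL, qshuf, mkMap_wd, shufW, wd_mul]

lemma delL_comp_shL (x y : Ltr) :
    delL F x ∘ₗ shL F q y =
      (if x = y then LinearMap.id else 0) + q ^ brk y x • (shL F q y ∘ₗ delL F x) := by
  refine lhom_ext_wd fun l => ?_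
  rcases l with _ | ⟨b, t⟩
  · by_cases hxy : x = y <;> simp [shL_wd_nil, delL_wd, hxy, Ne.symm]
  · obtain rfl | hxy := eq_or_ne x y <;> by_cases hbx : b = x <;>
      simp [shL_wd_cons, delL_wd, delL_wd_singleton_mul, Ne.symm, *]

lemma formₗ_shL_wd_nil (x : Ltr) (u : FA F) : formₗ F (shL F q x u) (wd F []) = 0 := by
  suffices (formₗ F).flip (wd F []) ∘ₗ shL F q x = 0 from congr($this u)
  refine lhom_ext_wd fun l => ?_
  rcases l with _ | ⟨b, t⟩
  · simp [shL_wd_nil, formₗ_wd_wd]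
  · simp [shL_wd_cons, formₗ_wd_wd, formₗ_wd_singleton_mul, delL_wd]

lemma lowL_wd (x : Ltr) (l : List Ltr) :
    lowL F q x (wd F l) = ∑ i ∈ Finset.range l.length,
      if l[i]? = some x then
        (q ^ (((l.take i).map (fun y => brk y x)).sum)) • wd F (l.eraseIdx i)
      else 0 :=
  mkMap_wd _ l

lemma lowL_wd_nil (x : Ltr) : lowL F q x (wd F []) = 0 := by
  simp [lowL_wd]

lemma lowL_wd_cons (hq : q ≠ 0) (x b : Ltr) (t : List Ltr) :
    lowL F q x (wd F (b :: t)) =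
      (if b = x then wd F t else 0) + q ^ brk b x • (wd F [b] * lowL F q x (wd F t)) := by
  rw [lowL_wd, lowL_wd, List.length_cons, Finset.sum_range_succ', Finset.mul_sum,
    Finset.smul_sum, add_comm]
  congr 1
  · simp
  · refine Finset.sum_congr rfl fun i _ => ?_
    simp only [List.getElem?_cons_succ, List.take_succ_cons, List.map_cons, List.sum_cons,
      List.eraseIdx_cons_succ]
    split_ifs <;> simp [smul_smul, wd_mul, ← zpow_add₀ hq, *]

lemma isAdjointPair_shL_lowL (hq : q ≠ 0) (x : Ltr) :
    (formₗ F).IsAdjointPair (formₗ F) (shL F q x) (lowL F q x) := by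
  suffices h : ∀ m u, formₗ F (shL F q x u) (wd F m) = formₗ F u (lowL F q x (wd F m)) by
    rw [LinearMap.isAdjointPair_iff_comp_eq_compl₂]
    exact LinearMap.ext fun u => lhom_ext_wd fun m => h m u
  intro m
  induction m with
  | nil => simp [formₗ_shL_wd_nil, lowL_wd_nil]
  | cons c m ih =>
    intro u
    -- both sides obey the same recursion in the leading letter `c`
    have hdelL := congr($(delL_comp_shL (F := F) (q := q) c x) u)
    calc formₗ F (shL F q x u) (wd F (c :: m))
        = formₗ F (wd F m) (delL F c (shL F q x u)) := by
          rw [formₗ_comm, ← formₗ_wd_singleton_mul, wd_mul, List.singleton_append]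
      _ = (if c = x then formₗ F (wd F m) u else 0) +
            q ^ brk x c * formₗ F (shL F q x (delL F c u)) (wd F m) := by
          split_ifs at hdelL ⊢ <;> simp_all [formₗ_comm (wd F m)]
      _ = formₗ F u (lowL F q x (wd F (c :: m))) := by
          rw [ih, formₗ_comm (delL F c u), ← formₗ_wd_singleton_mul, lowL_wd_cons hq, brk_comm]
          split_ifs <;> simp [formₗ_comm u]

lemma theta_wd_nil : theta F q (wd F []) = wd F [] :=
  mkMap_wd _ []

lemma theta_wd_cons (b : Ltr) (t : List Ltr) :
    theta F q (wd F (b :: t)) = shL F q b (theta F q (wd F t)) := by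
  simp [theta, mkMap_wd, thetaW, shL]

lemma theta_wd_singleton_mul (b : Ltr) (z : FA F) :
    theta F q (wd F [b] * z) = shL F q b (theta F q z) := by
  suffices theta F q ∘ₗ LinearMap.mulLeft F (wd F [b]) = shL F q b ∘ₗ theta F q from
    congr($this z)
  exact lhom_ext_wd fun l => by simp [wd_mul, theta_wd_cons]

lemma delL_comp_theta (hq : q ≠ 0) (x : Ltr) :
    delL F x ∘ₗ theta F q = theta F q ∘ₗ lowL F q x := by
  refine lhom_ext_wd fun l => ?_
  induction l with
  | nil => simp [theta_wd_nil, delL_wd, lowL_wd_nil]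
  | cons b t ih =>
    have hdelL := congr($(delL_comp_shL (F := F) (q := q) x b) (theta F q (wd F t)))
    simp only [LinearMap.comp_apply] at ih hdelL ⊢
    rw [theta_wd_cons, hdelL, lowL_wd_cons hq, map_add, map_smul, theta_wd_singleton_mul, ← ih,
      brk_comm]
    obtain rfl | hxb := eq_or_ne x b <;> simp [Ne.symm, *]

lemma formₗ_wd_nil_theta (v : FA F) : formₗ F (wd F []) (theta F q v) = formₗ F (wd F []) v := by
  suffices (formₗ F (wd F [])).comp (theta F q) = formₗ F (wd F []) from congr($this v)
  refine lhom_ext_wd fun l => ?_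
  rcases l with _ | ⟨b, t⟩
  · simp [theta_wd_nil]
  · simp [theta_wd_cons, formₗ_comm (wd F []), formₗ_shL_wd_nil, formₗ_wd_wd]

lemma isSelfAdjoint_theta (hq : q ≠ 0) : (formₗ F).IsSelfAdjoint (theta F q) := by
  rw [LinearMap.IsSelfAdjoint, LinearMap.isAdjointPair_iff_comp_eq_compl₂]
  refine lhom_ext_wd fun l => LinearMap.ext fun v => ?_
  simp only [LinearMap.comp_apply, LinearMap.compl₂_apply]
  induction l generalizing v with
  | nil => rw [theta_wd_nil, formₗ_wd_nil_theta]
  | cons a t ih =>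
    calc formₗ F (theta F q (wd F (a :: t))) v
        = formₗ F (wd F t) (theta F q (lowL F q a v)) := by
          rw [theta_wd_cons, isAdjointPair_shL_lowL hq, ih]
      _ = formₗ F (wd F t) (delL F a (theta F q v)) := by
          rw [← LinearMap.comp_apply (theta F q), ← delL_comp_theta hq, LinearMap.comp_apply]
      _ = formₗ F (wd F (a :: t)) (theta F q v) := by
          rw [← formₗ_wd_singleton_mul, wd_mul, List.singleton_append]

end SqPaper

open SqPaper in
theorem theta_selfAdjoint_general (F : Type*) [Field F] (q : F) (hq : q ≠ 0) :
    ∀ u v : FA F, form F (theta F q u) v = form F u (theta F q v) := by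
  intro u v
  simpa [formₗ_apply] using isSelfAdjoint_theta hq u v

open SqPaper in
/-- `θ` is self-adjoint with respect to the bilinear form `( , )`. -/
theorem theta_selfAdjoint (F : Type*) [Field F] (q : F) (hq : q ≠ 0)
    (hq1 : ∀ k : ℕ, 0 < k → q ^ k ≠ 1) :
    ∀ u v : FA F, form F (theta F q u) v = form F u (theta F q v) :=
  theta_selfAdjoint_general F q hq
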